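/- If f : [a,b] → ℝ (0 < a < b) is symmetrized harmonically convex on [a,b], then inf_{x∈[a,b]} f̆(x) = f(2ab/(a+b)) and sup_{x∈[a,b]} f̆(x) = (f(a)+f(b))/2, with the infimum attained at x = 2ab/(a+b) and the supremum attained at x = a (and x = b). -/

import Mathlib

/-!
Write `φ(s) = f̆(1/s)`. Harmonic convexity of `f̆` on `[a,b]` is ordinary convexity of `φ` on
`[1/b, 1/a]`, and in the variable `s = 1/t` the map `t ↦ abt/((a+b)t - ab)` becomes the reflection
`s ↦ 1/a + 1/b - s` of `[1/b, 1/a]` about its midpoint `(a+b)/(2ab)`, which leaves `φ` invariant.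
A convex function invariant under this reflection is least at the midpoint, i.e. at
`t = 2ab/(a+b)`, and like every convex function on an interval it is greatest at an endpoint.
-/

noncomputable def symTransform (a b : ℝ) (f : ℝ → ℝ) (t : ℝ) : ℝ :=
  (1/2) * (f t + f (a * b * t / ((a + b) * t - a * b)))

open Set

def HarmonicConvexOn (s : Set ℝ) (g : ℝ → ℝ) : Prop :=
  ∀ x ∈ s, ∀ y ∈ s, ∀ l ∈ Icc (0:ℝ) 1,
    g (x * y / (l * x + (1 - l) * y)) ≤ (1 - l) * g x + l * g y

lemma inv_mem_Icc_of_pos {c d s : ℝ} (hc : 0 < c) (hs : s ∈ Icc c d) : s⁻¹ ∈ Icc d⁻¹ c⁻¹ :=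
  ⟨inv_anti₀ (hc.trans_le hs.1) hs.2, inv_anti₀ hc hs.1⟩

lemma HarmonicConvexOn.convexOn_comp_inv {a b : ℝ} {g : ℝ → ℝ} (hb : 0 < b)
    (hg : HarmonicConvexOn (Icc a b) g) : ConvexOn ℝ (Icc b⁻¹ a⁻¹) (fun s ↦ g s⁻¹) := by
  refine ⟨convex_Icc _ _, fun s hs t ht μ ν hμ hν hμν ↦ ?_⟩
  have hs0 : 0 < s := (inv_pos.2 hb).trans_le hs.1
  have ht0 : 0 < t := (inv_pos.2 hb).trans_le ht.1
  have hsa : s⁻¹ ∈ Icc a b := by simpa using inv_mem_Icc_of_pos (inv_pos.2 hb) hs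
  have hta : t⁻¹ ∈ Icc a b := by simpa using inv_mem_Icc_of_pos (inv_pos.2 hb) ht
  have hcomb : s⁻¹ * t⁻¹ / (ν * s⁻¹ + (1 - ν) * t⁻¹) = (μ • s + ν • t)⁻¹ := by
    rw [← hμν, add_sub_cancel_right, smul_eq_mul, smul_eq_mul]
    field_simp
    ring
  have := hg _ hsa _ hta ν ⟨hν, by linarith⟩
  rwa [hcomb, ← hμν, add_sub_cancel_right] at this

lemma HarmonicConvexOn.le_max_of_mem_Icc {a b x : ℝ} {g : ℝ → ℝ} (ha : 0 < a)
    (hg : HarmonicConvexOn (Icc a b) g) (hx : x ∈ Icc a b) : g x ≤ max (g b) (g a) := by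
  have hb : 0 < b := ha.trans_le (hx.1.trans hx.2)
  have hba : b⁻¹ ≤ a⁻¹ := inv_anti₀ ha (hx.1.trans hx.2)
  simpa using (hg.convexOn_comp_inv hb).le_max_of_mem_Icc (left_mem_Icc.2 hba)
    (right_mem_Icc.2 hba) (inv_mem_Icc_of_pos ha hx)

section symTransform

variable {a b : ℝ} {f : ℝ → ℝ}

lemma symTransform_inv (ha : a ≠ 0) (hb : b ≠ 0) {s : ℝ} (hs : s ≠ 0) :
    symTransform a b f s⁻¹ = (f s⁻¹ + f (a⁻¹ + b⁻¹ - s)⁻¹) / 2 := by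
  have hden : (a + b) * s⁻¹ - a * b = a * b * s⁻¹ * (a⁻¹ + b⁻¹ - s) := by
    field_simp
    ring
  rw [symTransform, hden, div_mul_cancel_left₀ (by positivity)]
  ring

lemma symTransform_inv_reflect (ha : a ≠ 0) (hb : b ≠ 0) {s : ℝ} (hs : s ≠ 0)
    (hs' : a⁻¹ + b⁻¹ - s ≠ 0) :
    symTransform a b f (a⁻¹ + b⁻¹ - s)⁻¹ = symTransform a b f s⁻¹ := by
  rw [symTransform_inv ha hb hs, symTransform_inv ha hb hs', sub_sub_cancel, add_comm]

lemma symTransform_left (ha : a ≠ 0) (hb : b ≠ 0) : symTransform a b f a = (f a + f b) / 2 := by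
  simpa using symTransform_inv (f := f) ha hb (inv_ne_zero ha)

lemma symTransform_right (ha : a ≠ 0) (hb : b ≠ 0) : symTransform a b f b = (f a + f b) / 2 := by
  simpa [add_comm] using symTransform_inv (f := f) ha hb (inv_ne_zero hb)

lemma inv_two_mul_mul_div_add (ha : a ≠ 0) (hb : b ≠ 0) :
    (2 * a * b / (a + b))⁻¹ = (a⁻¹ + b⁻¹) / 2 := by
  rw [inv_div]
  field_simp
  ring

lemma two_mul_mul_div_add_mem_Icc (ha : 0 < a) (hab : a ≤ b) : 2 * a * b / (a + b) ∈ Icc a b := by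
  have hba : b⁻¹ ≤ a⁻¹ := inv_anti₀ ha hab
  have hmid : (a⁻¹ + b⁻¹) / 2 ∈ Icc b⁻¹ a⁻¹ := ⟨by linarith, by linarith⟩
  have := inv_mem_Icc_of_pos (inv_pos.2 (ha.trans_le hab)) hmid
  rwa [← inv_two_mul_mul_div_add ha.ne' (ha.trans_le hab).ne', inv_inv, inv_inv, inv_inv] at this

lemma symTransform_harmonicMean (ha : a ≠ 0) (hb : b ≠ 0) (hab : a + b ≠ 0) :
    symTransform a b f (2 * a * b / (a + b)) = f (2 * a * b / (a + b)) := by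
  have hH : (2 * a * b / (a + b))⁻¹ ≠ 0 := inv_ne_zero (by positivity)
  have hfixed : a⁻¹ + b⁻¹ - (2 * a * b / (a + b))⁻¹ = (2 * a * b / (a + b))⁻¹ := by
    rw [inv_two_mul_mul_div_add ha hb]
    ring
  simpa only [hfixed, inv_inv, add_self_div_two] using symTransform_inv (f := f) ha hb hH

lemma harmonicMean_le_symTransform (ha : 0 < a)
    (hf : HarmonicConvexOn (Icc a b) (symTransform a b f)) {x : ℝ} (hx : x ∈ Icc a b) :
    f (2 * a * b / (a + b)) ≤ symTransform a b f x := by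
  have hb : 0 < b := ha.trans_le (hx.1.trans hx.2)
  have hs : x⁻¹ ∈ Icc b⁻¹ a⁻¹ := inv_mem_Icc_of_pos ha hx
  have hs' : a⁻¹ + b⁻¹ - x⁻¹ ∈ Icc b⁻¹ a⁻¹ := ⟨by linarith [hs.2], by linarith [hs.1]⟩
  have hpos : ∀ s ∈ Icc b⁻¹ a⁻¹, s ≠ 0 := fun s hs ↦ ((inv_pos.2 hb).trans_le hs.1).ne'
  have hmid : (1 / 2 : ℝ) • x⁻¹ + (1 / 2 : ℝ) • (a⁻¹ + b⁻¹ - x⁻¹) = (2 * a * b / (a + b))⁻¹ := by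
    rw [inv_two_mul_mul_div_add ha.ne' hb.ne', smul_eq_mul, smul_eq_mul]
    ring
  have hconv := (hf.convexOn_comp_inv hb).2 hs hs' (show (0 : ℝ) ≤ 1 / 2 by norm_num)
    (show (0 : ℝ) ≤ 1 / 2 by norm_num) (by norm_num)
  simp only [smul_eq_mul] at hmid hconv
  rw [hmid, inv_inv, symTransform_harmonicMean ha.ne' hb.ne' (by positivity),
    symTransform_inv_reflect ha.ne' hb.ne' (hpos _ hs) (hpos _ hs'), inv_inv] at hconv
  linarith

end symTransform

/-- The infimum of `f̆` on `[a,b]` equals `f(2ab/(a+b))`, attained at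
`x = 2ab/(a+b)`, and the supremum equals `(f a + f b)/2`, attained at `a` and `b`. -/
theorem symTransform_inf_sup (a b : ℝ) (f : ℝ → ℝ)
    (ha : 0 < a) (hab : a < b)
    (hshc : ∀ x ∈ Set.Icc a b, ∀ y ∈ Set.Icc a b, ∀ l ∈ Set.Icc (0:ℝ) 1,
      symTransform a b f (x * y / (l * x + (1 - l) * y)) ≤
        (1 - l) * symTransform a b f x + l * symTransform a b f y) :
    IsLeast (symTransform a b f '' Set.Icc a b) (f (2 * a * b / (a + b))) ∧
      IsGreatest (symTransform a b f '' Set.Icc a b) ((f a + f b) / 2) ∧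
      symTransform a b f (2 * a * b / (a + b)) = f (2 * a * b / (a + b)) ∧
      symTransform a b f a = (f a + f b) / 2 ∧
      symTransform a b f b = (f a + f b) / 2 := by
  have hb : 0 < b := ha.trans hab
  have hf : HarmonicConvexOn (Icc a b) (symTransform a b f) := hshc
  have hleft := symTransform_left (f := f) ha.ne' hb.ne'
  have hright := symTransform_right (f := f) ha.ne' hb.ne'
  have hmean := symTransform_harmonicMean (f := f) ha.ne' hb.ne' (by positivity)
  refine ⟨⟨⟨_, two_mul_mul_div_add_mem_Icc ha hab.le, hmean⟩, ?_⟩, ⟨⟨a, left_mem_Icc.2 hab.le, hleft⟩, ?_⟩,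
    hmean, hleft, hright⟩
  · rintro _ ⟨x, hx, rfl⟩
    exact harmonicMean_le_symTransform ha hf hx
  · rintro _ ⟨x, hx, rfl⟩
    simpa only [hleft, hright, max_self] using hf.le_max_of_mem_Icc ha hx
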